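/- Let ψ(t) ∈ (0, π) satisfy cos ψ(t) = (1-3t²)/(2(t²-1)) for t ∈ (0, √(3/5)). Then ψ/2 varies strictly monotonically in t, lim_{t→√(3/5)} ψ(t)/2 = 0, and lim_{t→0} ψ(t)/2 = π/3. -/

import Mathlib

open Real Filter Set

noncomputable def ψfun (t : ℝ) : ℝ :=
  Real.arccos ((1 - 3 * t ^ 2) / (2 * (t ^ 2 - 1)))

/-
On `0 ≤ t < 1` the cosine `(1 - 3t²)/(2(t² - 1)) = 1/(1 - t²) - 3/2` is strictly increasing, from
`-1/2` at `t = 0` to `1` at `t = √(3/5)`. Since `arccos` is strictly decreasing and continuous on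
`[-1, 1]`, `ψ` decreases strictly from `arccos (-1/2) = 2π/3` to `arccos 1 = 0`, and both limits
are values of a function continuous at the endpoints.
-/

noncomputable def cosψ (t : ℝ) : ℝ := (1 - 3 * t ^ 2) / (2 * (t ^ 2 - 1))

lemma ψfun_eq_arccos_cosψ (t : ℝ) : ψfun t = arccos (cosψ t) := rfl

lemma cosψ_eq {t : ℝ} (ht : t ^ 2 ≠ 1) : cosψ t = 1 / (1 - t ^ 2) - 3 / 2 := by
  have h : 1 - t ^ 2 ≠ 0 := sub_ne_zero.mpr (Ne.symm ht)
  have h' : t ^ 2 - 1 ≠ 0 := sub_ne_zero.mpr ht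
  unfold cosψ
  field_simp
  ring

lemma strictMonoOn_cosψ : StrictMonoOn cosψ (Ico 0 1) := by
  intro x ⟨hx0, hx1⟩ y ⟨hy0, hy1⟩ hxy
  have hx2 : x ^ 2 < 1 := by nlinarith
  have hy2 : y ^ 2 < 1 := by nlinarith
  have hsq : x ^ 2 < y ^ 2 := by gcongr
  rw [cosψ_eq hx2.ne, cosψ_eq hy2.ne]
  gcongr 1 / ?_ - _
  linarith

lemma sq_sqrt_three_fifths : √(3 / 5 : ℝ) ^ 2 = 3 / 5 := sq_sqrt (by norm_num)

lemma sqrt_three_fifths_lt_one : √(3 / 5 : ℝ) < 1 :=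
  (sqrt_lt' one_pos).mpr (by norm_num)

lemma cosψ_zero : cosψ 0 = -1 / 2 := by norm_num [cosψ]

lemma cosψ_sqrt_three_fifths : cosψ √(3 / 5) = 1 := by
  rw [cosψ, sq_sqrt_three_fifths]; norm_num

lemma Icc_sqrt_three_fifths_subset : Icc 0 √(3 / 5) ⊆ Ico (0 : ℝ) 1 :=
  Icc_subset_Ico_right sqrt_three_fifths_lt_one

lemma cosψ_mem_Icc {t : ℝ} (ht : t ∈ Icc 0 √(3 / 5)) : cosψ t ∈ Icc (-1) 1 := by
  have hmono := strictMonoOn_cosψ.monotoneOn.mono Icc_sqrt_three_fifths_subset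
  have hlo := hmono (left_mem_Icc.mpr (ht.1.trans ht.2)) ht ht.1
  have hhi := hmono ht (right_mem_Icc.mpr (ht.1.trans ht.2)) ht.2
  rw [cosψ_zero] at hlo
  rw [cosψ_sqrt_three_fifths] at hhi
  exact ⟨by linarith, hhi⟩

lemma strictAntiOn_ψfun : StrictAntiOn ψfun (Icc 0 √(3 / 5)) := fun _ hx _ hy hxy =>
  strictAntiOn_arccos (cosψ_mem_Icc hx) (cosψ_mem_Icc hy)
    (strictMonoOn_cosψ (Icc_sqrt_three_fifths_subset hx) (Icc_sqrt_three_fifths_subset hy) hxy)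

lemma continuousAt_ψfun {t : ℝ} (ht : t ^ 2 ≠ 1) : ContinuousAt ψfun t := by
  refine continuous_arccos.continuousAt.comp (ContinuousAt.div (by fun_prop) (by fun_prop) ?_)
  exact mul_ne_zero two_ne_zero (sub_ne_zero.mpr ht)

lemma ψfun_zero : ψfun 0 = 2 * π / 3 := by
  rw [ψfun_eq_arccos_cosψ, cosψ_zero, show (-1 / 2 : ℝ) = -(1 / 2) by ring, arccos_neg,
    ← cos_pi_div_three, arccos_cos (by positivity) (by linarith [pi_pos])]
  ring

lemma ψfun_sqrt_three_fifths : ψfun √(3 / 5) = 0 := by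
  rw [ψfun_eq_arccos_cosψ, cosψ_sqrt_three_fifths, arccos_one]

theorem stmt8 :
    StrictAntiOn (fun t => ψfun t / 2) (Set.Ioo 0 (Real.sqrt (3 / 5))) ∧
    Tendsto (fun t => ψfun t / 2)
      (nhdsWithin (Real.sqrt (3 / 5)) (Set.Iio (Real.sqrt (3 / 5)))) (nhds 0) ∧
    Tendsto (fun t => ψfun t / 2) (nhdsWithin 0 (Set.Ioi 0)) (nhds (π / 3)) := by
  refine ⟨fun x hx y hy hxy => ?_, ?_, ?_⟩
  · have := strictAntiOn_ψfun (Ioo_subset_Icc_self hx) (Ioo_subset_Icc_self hy) hxy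
    dsimp only
    linarith
  · have hc := (continuousAt_ψfun (by rw [sq_sqrt_three_fifths]; norm_num)).div_const 2
    simpa only [ψfun_sqrt_three_fifths, zero_div] using hc.tendsto.mono_left nhdsWithin_le_nhds
  · have hc := (continuousAt_ψfun (t := 0) (by norm_num)).div_const 2
    have hlim := hc.tendsto.mono_left (nhdsWithin_le_nhds (s := Ioi 0))
    rwa [ψfun_zero, show 2 * π / 3 / 2 = π / 3 by ring] at hlim
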